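/- arXiv:1407.2820 — 7 statements merged into one kernel-verified Lean document; each statement's English description precedes it below -/
import Mathlib

section
/- Let H be a subgroup of a direct product P = F₁ × ⋯ × Fₘ of groups that projects onto each factor (a subdirect product). For i = 1,…,m let ρᵢ : P → Fᵢ be the canonical projection and set Nᵢ = H ∩ ker ρᵢ. Then for distinct indices i, j, the image of H under the projection ρᵢⱼ : P → Fᵢ × Fⱼ has finite index in Fᵢ × Fⱼ if and only if Nᵢ·Nⱼ has finite index in H. -/
/-!
Restricting the projections to `H` gives surjections `fᵢ, fⱼ : H → Fᵢ, Fⱼ` with kernels `Nᵢ, Nⱼ`,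
and `ρᵢⱼ(H)` is the range of `fᵢ × fⱼ`. A subgroup `D ≤ A × B` has finite index iff both of its
Goursat subgroups `D ∩ (A × 1)` and `D ∩ (1 × B)` do: one direction pulls back along the inclusions,
the other uses that `D` contains their product. For `D = ρᵢⱼ(H)` these are `fᵢ(Nⱼ)` and `fⱼ(Nᵢ)`,
and by surjectivity `[Fᵢ : fᵢ(Nⱼ)] = [H : NᵢNⱼ] = [Fⱼ : fⱼ(Nᵢ)]`.
-/

open Function

namespace Subgroup
variable {G A B : Type*} [Group G] [Group A] [Group B]

lemma index_ne_zero_iff_goursatFst_and_goursatSnd (I : Subgroup (A × B)) :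
    I.index ≠ 0 ↔ I.goursatFst.index ≠ 0 ∧ I.goursatSnd.index ≠ 0 := by
  have hFst : I.goursatFst = I.comap (MonoidHom.inl A B) := by ext; simp
  have hSnd : I.goursatSnd = I.comap (MonoidHom.inr A B) := by ext; simp
  refine ⟨fun h => ?_, fun ⟨hFst, hSnd⟩ => ?_⟩
  · rw [hFst, hSnd, index_comap, index_comap]
    exact ⟨mt index_eq_zero_of_relIndex_eq_zero h, mt index_eq_zero_of_relIndex_eq_zero h⟩
  · have hprod : (I.goursatFst.prod I.goursatSnd).index ≠ 0 := by
      rw [index_prod]; exact mul_ne_zero hFst hSnd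
    exact ne_zero_of_dvd_ne_zero hprod (index_dvd_of_le (goursatFst_prod_goursatSnd_le I))

lemma goursatFst_range_prod (f : G →* A) (g : G →* B) :
    (f.prod g).range.goursatFst = g.ker.map f := by
  ext a; simp [eq_comm, and_comm]

lemma goursatSnd_range_prod (f : G →* A) (g : G →* B) :
    (f.prod g).range.goursatSnd = f.ker.map g := by
  ext b; simp [eq_comm]

lemma index_map_ker_eq_index_ker_sup_ker {f : G →* A} (hf : Surjective f) (g : G →* B) :
    (g.ker.map f).index = (f.ker ⊔ g.ker).index := by
  rw [← index_map_eq _ hf le_sup_left, map_sup, (map_eq_bot_iff _).mpr le_rfl, bot_sup_eq]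

lemma index_range_prod_ne_zero_iff {f : G →* A} {g : G →* B} (hf : Surjective f)
    (hg : Surjective g) : (f.prod g).range.index ≠ 0 ↔ (f.ker ⊔ g.ker).index ≠ 0 := by
  rw [index_ne_zero_iff_goursatFst_and_goursatSnd, goursatFst_range_prod, goursatSnd_range_prod,
    index_map_ker_eq_index_ker_sup_ker hf, index_map_ker_eq_index_ker_sup_ker hg, sup_comm,
    and_self]

end Subgroup

open Subgroup in
theorem stmt_0_general {m : ℕ} (F : Fin m → Type*) [∀ i, Group (F i)]
    (H : Subgroup (∀ i, F i))
    (hsub : ∀ i, H.map (Pi.evalMonoidHom F i) = ⊤)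
    (i j : Fin m) :
    (H.map ((Pi.evalMonoidHom F i).prod (Pi.evalMonoidHom F j))).index ≠ 0 ↔
      (((H ⊓ (Pi.evalMonoidHom F i).ker) ⊔ (H ⊓ (Pi.evalMonoidHom F j).ker)).relIndex H) ≠ 0 := by
  have hρ : ∀ k, Surjective ((Pi.evalMonoidHom F k).comp H.subtype) := fun k => by
    rw [← MonoidHom.range_eq_top, MonoidHom.range_comp, range_subtype, hsub]
  have hker : ∀ k, (H ⊓ (Pi.evalMonoidHom F k).ker).subgroupOf H =
      ((Pi.evalMonoidHom F k).comp H.subtype).ker := fun k => by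
    rw [inf_subgroupOf_left, subgroupOf, MonoidHom.comap_ker]
  have hrange : H.map ((Pi.evalMonoidHom F i).prod (Pi.evalMonoidHom F j)) =
      (((Pi.evalMonoidHom F i).comp H.subtype).prod
        ((Pi.evalMonoidHom F j).comp H.subtype)).range := by
    ext; simp
  rw [hrange, relIndex, subgroupOf_sup inf_le_left inf_le_left, hker, hker]
  exact index_range_prod_ne_zero_iff (hρ i) (hρ j)

/-- For a subdirect product `H ≤ F₁ × ⋯ × Fₘ`, the projection of `H` to
`Fᵢ × Fⱼ` has finite index iff `NᵢNⱼ` has finite index in `H`, where `Nᵢ = H ∩ ker ρᵢ`. -/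
theorem stmt_0 {m : ℕ} (F : Fin m → Type*) [∀ i, Group (F i)]
    (H : Subgroup (∀ i, F i))
    (hsub : ∀ i, H.map (Pi.evalMonoidHom F i) = ⊤)
    (i j : Fin m) (hij : i ≠ j) :
    (H.map ((Pi.evalMonoidHom F i).prod (Pi.evalMonoidHom F j))).index ≠ 0 ↔
      (((H ⊓ (Pi.evalMonoidHom F i).ker) ⊔ (H ⊓ (Pi.evalMonoidHom F j).ker)).relIndex H) ≠ 0 :=
  stmt_0_general F H hsub i j
end

section
/- Let H and F be groups and ψ₁, ψ₂ : H → F two surjective homomorphisms. Suppose H is generated by a subset X ⊆ H, and let M be the normal closure in F of the set { ψ₁(x)⁻¹ ψ₂(x) : x ∈ X }. Then ψ₁(ker ψ₂) ⊆ M. -/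
/-- If `ψ₁ ψ₂ : H → F` are epimorphisms, `X` generates `H`, and `M` is the
normal closure of `{ψ₁(x)⁻¹ψ₂(x) : x ∈ X}` in `F`, then `ψ₁(ker ψ₂) ⊆ M`. -/
theorem stmt_1 {H F : Type*} [Group H] [Group F] (ψ₁ ψ₂ : H →* F)
    (h₁ : Function.Surjective ψ₁) (h₂ : Function.Surjective ψ₂)
    (X : Set H) (hX : Subgroup.closure X = ⊤) :
    ψ₂.ker.map ψ₁ ≤
      Subgroup.normalClosure ((fun x => (ψ₁ x)⁻¹ * ψ₂ x) '' X) := by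
  set M := Subgroup.normalClosure ((fun x => (ψ₁ x)⁻¹ * ψ₂ x) '' X) with hM
  have hnorm : M.Normal := Subgroup.normalClosure_normal
  have key : ∀ h : H, (ψ₁ h)⁻¹ * ψ₂ h ∈ M := by
    let K : Subgroup H :=
      { carrier := {h | (ψ₁ h)⁻¹ * ψ₂ h ∈ M}
        one_mem' := by
          simp only [Set.mem_setOf_eq, map_one, inv_one, one_mul]
          exact one_mem M
        mul_mem' := by
          intro a b ha hb
          simp only [Set.mem_setOf_eq, map_mul] at *
          have : (ψ₁ a * ψ₁ b)⁻¹ * (ψ₂ a * ψ₂ b)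
              = ((ψ₁ b)⁻¹ * ((ψ₁ a)⁻¹ * ψ₂ a) * ψ₁ b) * ((ψ₁ b)⁻¹ * ψ₂ b) := by
            group
          rw [this]
          exact mul_mem (hnorm.conj_mem' _ ha _) hb
        inv_mem' := by
          intro a ha
          simp only [Set.mem_setOf_eq, map_inv] at *
          have : (ψ₁ a)⁻¹⁻¹ * (ψ₂ a)⁻¹
              = ψ₁ a * ((ψ₁ a)⁻¹ * ψ₂ a)⁻¹ * (ψ₁ a)⁻¹ := by group
          rw [this]
          exact hnorm.conj_mem _ (inv_mem ha) _ }
    have hXK : X ⊆ K := fun x hx =>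
      Subgroup.subset_normalClosure ⟨x, hx, rfl⟩
    have : Subgroup.closure X ≤ K := (Subgroup.closure_le K).2 hXK
    intro h
    exact this (hX ▸ Subgroup.mem_top h)
  rintro f ⟨h, hh, rfl⟩
  have := key h
  rw [show ψ₂ h = 1 from hh, mul_one] at this
  simpa using inv_mem this
end

section
/- Let H and F be groups and ψ₁, ψ₂ : H → F two surjective homomorphisms, with H generated by a subset X. Let M be the normal closure in F of { ψ₁(x)⁻¹ψ₂(x) : x ∈ X } and let L = (ker ψ₁)(ker ψ₂) ⊴ H. Then there is a surjective group homomorphism from H/L onto F/M. -/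
/-- With `ψ₁, ψ₂ : H → F` epimorphisms, `X` generating `H`, `M` the normal
closure of `{ψ₁(x)⁻¹ψ₂(x) : x ∈ X}` and `L = (ker ψ₁)(ker ψ₂)`, the quotient `H/L`
surjects onto `F/M`. -/
theorem stmt_2 {H F : Type*} [Group H] [Group F] (ψ₁ ψ₂ : H →* F)
    (h₁ : Function.Surjective ψ₁) (h₂ : Function.Surjective ψ₂)
    (X : Set H) (hX : Subgroup.closure X = ⊤) :
    ∃ π : H ⧸ (ψ₁.ker ⊔ ψ₂.ker) →*
        F ⧸ Subgroup.normalClosure ((fun x => (ψ₁ x)⁻¹ * ψ₂ x) '' X),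
      Function.Surjective π := by
  set N := Subgroup.normalClosure ((fun x => (ψ₁ x)⁻¹ * ψ₂ x) '' X) with hN
  let q : F →* F ⧸ N := QuotientGroup.mk' N
  have hfg : q.comp ψ₁ = q.comp ψ₂ := by
    ext1 h
    have : h ∈ Subgroup.closure X := hX ▸ Subgroup.mem_top h
    have := MonoidHom.eqOn_closure (f := q.comp ψ₁) (g := q.comp ψ₂)
      (fun x hx => by
        simp only [MonoidHom.comp_apply]
        have hmem : (ψ₁ x)⁻¹ * ψ₂ x ∈ N :=
          Subgroup.subset_normalClosure ⟨x, hx, rfl⟩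
        have : q ((ψ₁ x)⁻¹ * ψ₂ x) = 1 := (QuotientGroup.eq_one_iff _).2 hmem
        rw [map_mul, map_inv] at this
        exact (inv_mul_eq_one.mp this)) this
    exact this
  have hker : ψ₁.ker ⊔ ψ₂.ker ≤ (q.comp ψ₁).ker := by
    refine sup_le ?_ ?_
    · intro h hh
      simp only [MonoidHom.mem_ker, MonoidHom.comp_apply] at *
      rw [hh, map_one]
    · intro h hh
      rw [hfg]
      simp only [MonoidHom.mem_ker, MonoidHom.comp_apply] at *
      rw [hh, map_one]
  refine ⟨QuotientGroup.lift _ (q.comp ψ₁) hker, ?_⟩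
  intro y
  obtain ⟨f, rfl⟩ := QuotientGroup.mk'_surjective N y
  obtain ⟨h, rfl⟩ := h₁ f
  exact ⟨QuotientGroup.mk h, rfl⟩
end

section
/- Let A be a group with the unique root property, let F ≤ A be a subgroup, and let N ⊴ F be a normal subgroup of F that is infinite cyclic, generated by an element t of A. Then N is central in F; that is, every element of F commutes with t. -/
/-!
Conjugation by `f ∈ F` restricts to an automorphism of the infinite cyclic group `⟨t⟩`, so it
sends `t` to `t` or to `t⁻¹`. In the second case `(t * f) ^ 2 = t * (f * t * f⁻¹) * f ^ 2 = f ^ 2`,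
and uniqueness of square roots forces `t = 1`, which has finite order.
-/

section

variable {G : Type*} [Group G]

lemma conj_eq_self_or_inv_of_conj_mem_zpowers {t f : G} (ht : ¬IsOfFinOrder t)
    (h₁ : f * t * f⁻¹ ∈ Subgroup.zpowers t) (h₂ : f⁻¹ * t * f ∈ Subgroup.zpowers t) :
    f * t * f⁻¹ = t ∨ f * t * f⁻¹ = t⁻¹ := by
  obtain ⟨a, ha⟩ := Subgroup.mem_zpowers_iff.mp h₁
  obtain ⟨b, hb⟩ := Subgroup.mem_zpowers_iff.mp h₂
  have hba : t ^ (b * a) = t ^ (1 : ℤ) :=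
    calc t ^ (b * a) = (f⁻¹ * t * f⁻¹⁻¹) ^ a := by rw [zpow_mul, hb, inv_inv]
      _ = f⁻¹ * t ^ a * f⁻¹⁻¹ := conj_zpow
      _ = t ^ (1 : ℤ) := by rw [ha]; group
  have hba' : b * a = 1 := injective_zpow_iff_not_isOfFinOrder.mpr ht hba
  rcases Int.eq_one_or_neg_one_of_mul_eq_one' hba' with ⟨-, rfl⟩ | ⟨-, rfl⟩
  · exact .inl (by rw [← ha, zpow_one])
  · exact .inr (by rw [← ha, zpow_neg_one])

lemma eq_one_of_conj_eq_inv (hsq : Function.Injective fun g : G => g ^ 2) {t f : G}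
    (h : f * t * f⁻¹ = t⁻¹) : t = 1 := by
  have hsq_eq : (t * f) ^ 2 = f ^ 2 :=
    calc (t * f) ^ 2 = t * (f * t * f⁻¹) * f ^ 2 := by simp only [pow_two]; group
      _ = f ^ 2 := by rw [h, mul_inv_cancel, one_mul]
  simpa using hsq hsq_eq

end

/-- If `A` has the unique root property, `F ≤ A`, and `N = ⟨t⟩` is an infinite
cyclic normal subgroup of `F`, then `N` is central in `F`: every element of `F` commutes
with `t`. -/
theorem stmt_4 {A : Type*} [Group A]
    (hroot : ∀ (g h : A) (m : ℤ), m ≠ 0 → g ^ m = h ^ m → g = h)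
    (F : Subgroup A) (t : A) (htF : t ∈ F) (hinf : ¬ IsOfFinOrder t)
    (hnorm : ((Subgroup.zpowers t).subgroupOf F).Normal) :
    ∀ f ∈ F, f * t = t * f := by
  intro f hf
  have htN : (⟨t, htF⟩ : F) ∈ (Subgroup.zpowers t).subgroupOf F :=
    Subgroup.mem_subgroupOf.mpr (Subgroup.mem_zpowers t)
  have h₁ := Subgroup.mem_subgroupOf.mp (hnorm.conj_mem _ htN ⟨f, hf⟩)
  have h₂ := Subgroup.mem_subgroupOf.mp (hnorm.conj_mem _ htN ⟨f, hf⟩⁻¹)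
  simp only [Subgroup.coe_mul, Subgroup.coe_inv, inv_inv] at h₁ h₂
  have hsq : Function.Injective fun g : A => g ^ 2 := fun g h hgh =>
    hroot g h 2 two_ne_zero (by exact_mod_cast hgh)
  rcases conj_eq_self_or_inv_of_conj_mem_zpowers hinf h₁ h₂ with hconj | hconj
  · exact mul_inv_eq_iff_eq_mul.mp hconj
  · exact absurd (eq_one_of_conj_eq_inv hsq hconj ▸ IsOfFinOrder.one) hinf
end

section
/- Let A and B be groups, F ≤ A, and φ : F → B a homomorphism with kernel N. Let C = A × (B ∗ ⟨t⟩), where ⟨t⟩ is infinite cyclic. Then the subgroup Ḡ of C generated by { (f, φ(f)) : f ∈ F } and the element (1, t) is isomorphic to the special HNN-extension G = ⟨F, t ∣ tht⁻¹ = h, ∀ h ∈ N⟩ of F with respect to N. -/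
open HNNExtension Monoid

/-- Let `F ≤ A`, `φ : F → B` with kernel `N`, and
`C = A × (B ∗ ⟨t⟩)` with `⟨t⟩` infinite cyclic. The subgroup of `C` generated by
`{(f, φ f) : f ∈ F}` together with `(1, t)` is isomorphic to the special
HNN-extension `⟨F, t ∣ tht⁻¹ = h, ∀ h ∈ N⟩` of `F` with respect to `N = ker φ`. -/
theorem stmt_6 {A B : Type*} [Group A] [Group B] (F : Subgroup A) (φ : F →* B)
    (Gbar : Subgroup (A × Monoid.Coprod B (FreeGroup Unit)))
    (hGbar : Gbar = Subgroup.closure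
      (Set.range (fun f : F => ((f : A), Monoid.Coprod.inl (φ f))) ∪
        {((1 : A), Monoid.Coprod.inr (FreeGroup.of ()))})) :
    Nonempty ((HNNExtension F φ.ker φ.ker (MulEquiv.refl φ.ker)) ≃* Gbar) := by
  classical
  set f : F →* A × Monoid.Coprod B (FreeGroup Unit) := (F.subtype).prod (Coprod.inl.comp φ) with hf
  set τ : A × Monoid.Coprod B (FreeGroup Unit) := ((1 : A), Coprod.inr (FreeGroup.of ())) with hτ
  have hx : ∀ a : φ.ker, τ * f ↑a = f ((MulEquiv.refl φ.ker) a : F) * τ := by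
    intro a
    have ha : φ a = 1 := a.2
    simp [hf, hτ, Prod.ext_iff, ha, MonoidHom.prod_apply]
  set Φ : HNNExtension F φ.ker φ.ker (MulEquiv.refl φ.ker) →* A × Monoid.Coprod B (FreeGroup Unit) :=
    HNNExtension.lift f τ hx with hΦ
  have hΦof : ∀ g : F, Φ (HNNExtension.of g) = ((g : A), Coprod.inl (φ g)) := by
    intro g; simp [hΦ, hf, MonoidHom.prod_apply]
  have hΦt : Φ HNNExtension.t = τ := by simp [hΦ]
  -- the auxiliary HNN extension `B ∗ ⟨t⟩ = HNNExtension B ⊥ ⊥`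
  set ρ : Monoid.Coprod B (FreeGroup Unit) →* HNNExtension B ⊥ ⊥ (MulEquiv.refl (⊥ : Subgroup B)) :=
    Coprod.lift HNNExtension.of (FreeGroup.lift (fun _ => HNNExtension.t)) with hρ
  set Ψ : HNNExtension F φ.ker φ.ker (MulEquiv.refl φ.ker) →* HNNExtension B ⊥ ⊥ (MulEquiv.refl (⊥ : Subgroup B)) :=
    ρ.comp ((MonoidHom.snd A _).comp Φ) with hΨ
  have hΨof : ∀ g : F, Ψ (HNNExtension.of g) = HNNExtension.of (φ g) := by
    intro g; simp [hΨ, hΦof, hρ]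
  have hΨt : Ψ HNNExtension.t = HNNExtension.t := by
    simp [hΨ, hΦt, hτ, hρ]
  -- injectivity of Φ
  have hinj : Function.Injective Φ := by
    rw [injective_iff_map_eq_one]
    intro g hg
    obtain ⟨d⟩ := (inferInstance : Nonempty (HNNExtension.NormalWord.TransversalPair F φ.ker φ.ker))
    set w := HNNExtension.NormalWord.equiv (MulEquiv.refl φ.ker) d g with hwdef
    have hw : w.prod (MulEquiv.refl φ.ker) = g :=
      (HNNExtension.NormalWord.equiv (MulEquiv.refl φ.ker) d).symm_apply_apply g
    have hmem : ∀ (u : ℤˣ) (x : F), x ∈ toSubgroup φ.ker φ.ker u ↔ φ x = 1 := by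
      intro u x
      rcases Int.units_eq_one_or u with rfl | rfl <;>
        simp [MonoidHom.mem_ker]
    have hmem' : ∀ (u : ℤˣ) (y : B), y ∈ toSubgroup (⊥ : Subgroup B) ⊥ u ↔ y = 1 := by
      intro u y
      rcases Int.units_eq_one_or u with rfl | rfl <;> simp
    set w' : HNNExtension.NormalWord.ReducedWord B ⊥ ⊥ :=
      { head := φ w.head
        toList := w.toList.map (fun x => (x.1, φ x.2))
        chain := by
          rw [List.isChain_map]
          refine w.chain.imp ?_
          intro a b h hb
          exact h ((hmem a.1 a.2).2 ((hmem' a.1 (φ a.2)).1 hb)) } with hw'def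
    have hkey : w'.prod (MulEquiv.refl (⊥ : Subgroup B)) = Ψ g := by
      rw [← hw]
      show _ = Ψ (HNNExtension.of w.head *
        (w.toList.map (fun x => HNNExtension.t ^ (x.1 : ℤ) * HNNExtension.of x.2)).prod)
      rw [map_mul, map_list_prod, List.map_map]
      show HNNExtension.of (φ w.head) *
        ((w.toList.map (fun x => (x.1, φ x.2))).map
          (fun x => HNNExtension.t ^ (x.1 : ℤ) * HNNExtension.of x.2)).prod = _
      rw [List.map_map, hΨof]
      refine congrArg _ (congrArg List.prod (List.map_congr_left ?_))
      intro x _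
      simp [map_mul, map_zpow, hΨof, hΨt]
    have hΨg : Ψ g = 1 := by
      rw [hΨ]
      simp only [MonoidHom.comp_apply, hg]
      simp
    have hnil : w'.toList = [] := by
      refine HNNExtension.ReducedWord.toList_eq_nil_of_mem_of_range (MulEquiv.refl (⊥ : Subgroup B)) w' ?_
      rw [hkey, hΨg]
      exact ⟨1, map_one _⟩
    have hnil' : w.toList = [] := by
      have := hnil
      rw [hw'def] at this
      simpa using this
    have hg' : g = HNNExtension.of w.head := by
      rw [← hw]
      show HNNExtension.of w.head *
        (w.toList.map (fun x => HNNExtension.t ^ (x.1 : ℤ) * HNNExtension.of x.2)).prod = _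
      rw [hnil']
      simp
    rw [hg', hΦof] at hg
    have h1 : (w.head : A) = 1 := congrArg Prod.fst hg
    have h2 : w.head = 1 := Subtype.ext h1
    rw [hg', h2, map_one]
  -- range of Φ is Gbar
  have hrange : Φ.range = Gbar := by
    rw [hGbar]
    apply le_antisymm
    · rintro _ ⟨g, rfl⟩
      induction g using HNNExtension.induction_on with
      | of g =>
        rw [hΦof]
        exact Subgroup.subset_closure (Or.inl ⟨g, rfl⟩)
      | t =>
        rw [hΦt]
        exact Subgroup.subset_closure (Or.inr rfl)
      | mul x y hx hy => rw [map_mul]; exact mul_mem hx hy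
      | inv x hx => rw [map_inv]; exact inv_mem hx
    · rw [Subgroup.closure_le]
      rintro x (⟨g, rfl⟩ | rfl)
      · exact ⟨HNNExtension.of g, hΦof g⟩
      · exact ⟨HNNExtension.t, hΦt⟩
  exact ⟨(MonoidHom.ofInjective hinj).trans (MulEquiv.subgroupCongr hrange)⟩
end

section
/- Let F = F(x,y,z) be free of rank 3, let w₁,…,w_d ∈ ⟨x,y⟩ freely generate a free subgroup of rank d (d ≥ 2), and let Lᵢ be the normal closure of z⁻¹wᵢ in F. Then the iterated commutator [z⁻¹w₁, z⁻¹w₂, …, z⁻¹w_{d−1}] lies in ⋂_{j=1}^{d−1} Lⱼ but not in L_d; in particular ⋂_{j ≠ d} Lⱼ is not contained in L_d. -/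
/-!
Under the retraction `z ↦ w_d` of `F` onto `⟨x, y⟩`, which kills `L_d`, the commutator maps to
`[w_d⁻¹w₁, …, w_d⁻¹w_{d-1}]`. This is the image, under the injective map `eᵢ ↦ wᵢ`, of
`[e_d⁻¹e₁, …, e_d⁻¹e_{d-1}]` in the free group on `e₁, …, e_d`, and killing `e_d` turns the
latter into `[e₁, …, e_{d-1}]`. An iterated commutator of distinct free generators is nontrivial
because an element `g ≠ 1` of `⟨e_j : j ≠ a⟩` does not commute with `e_a`: let `e_a` swap two
copies of the free group and let the other generators multiply on the left in the first copy
only; then `g e_a` and `e_a g` send `1` of the second copy to different points.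
Membership in `L_j` for `j < d` holds since `L_j` is normal and contains an entry of the commutator.
-/

open scoped commutatorElement

/-- Left-normed iterated commutator `[[…[g, h₁], h₂], …, hₖ]`. -/
def leftNormedCommutator {G : Type*} [Group G] : G → List G → G
  | g, [] => g
  | g, h :: rest => leftNormedCommutator ⁅g, h⁆ rest

section Group

variable {G H : Type*} [Group G] [Group H]

theorem map_leftNormedCommutator (f : G →* H) (g : G) (l : List G) :
    f (leftNormedCommutator g l) = leftNormedCommutator (f g) (l.map f) := by
  induction l generalizing g with
  | nil => rfl
  | cons h l ih => simp only [leftNormedCommutator, ih, map_commutatorElement, List.map_cons]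

theorem leftNormedCommutator_mem {N : Subgroup G} [N.Normal] {g x : G} {l : List G}
    (hx : x ∈ g :: l) (hxN : x ∈ N) : leftNormedCommutator g l ∈ N := by
  induction l generalizing g x with
  | nil => exact List.mem_singleton.1 hx ▸ hxN
  | cons h l ih =>
    have hgh : g ∈ N ∨ h ∈ N → ⁅g, h⁆ ∈ N := by
      rintro (hg | hh)
      · exact Subgroup.commutator_le_left N ⊤ (Subgroup.commutator_mem_commutator hg trivial)
      · exact Subgroup.commutator_le_right ⊤ N (Subgroup.commutator_mem_commutator trivial hh)
    rcases List.mem_cons.1 hx with rfl | hx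
    · exact ih List.mem_cons_self (hgh (.inl hxN))
    rcases List.mem_cons.1 hx with rfl | hx
    · exact ih List.mem_cons_self (hgh (.inr hxN))
    · exact ih (List.mem_cons_of_mem _ hx) hxN

end Group

namespace FreeGroup

variable {α : Type*}

theorem lift_update_of_apply_of_mem_closure [DecidableEq α] {a : α} {s : Set α} (ha : a ∉ s)
    (t : FreeGroup α) {g : FreeGroup α} (hg : g ∈ Subgroup.closure (of '' s)) :
    lift (Function.update of a t) g = g := by
  refine MonoidHom.eqOn_closure (f := lift (Function.update of a t)) (g := MonoidHom.id _) ?_ hg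
  rintro _ ⟨b, hb, rfl⟩
  simp [Function.update_of_ne (ne_of_mem_of_not_mem hb ha)]

def swapAction [DecidableEq α] (a : α) : FreeGroup α →* Equiv.Perm (FreeGroup α ⊕ FreeGroup α) :=
  lift fun b => if b = a then Equiv.sumComm _ _ else Equiv.sumCongr (Equiv.mulLeft (of b)) 1

theorem swapAction_of_self [DecidableEq α] (a : α) : swapAction a (of a) = Equiv.sumComm _ _ := by
  simp [swapAction]

theorem swapAction_apply_of_mem_closure [DecidableEq α] {a : α} {g : FreeGroup α}
    (hg : g ∈ Subgroup.closure (of '' {a}ᶜ)) (x : FreeGroup α ⊕ FreeGroup α) :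
    swapAction a g x = Sum.map (g * ·) id x := by
  have := MonoidHom.eqOn_closure (f := swapAction a)
    (g := (Equiv.Perm.sumCongrHom _ _).comp ((MulAction.toPermHom _ _).prod 1)) ?_ hg
  · rw [this]; rcases x with x | x <;> rfl
  rintro _ ⟨b, hb, rfl⟩
  ext (x | x) : 1 <;> simp [swapAction, if_neg (Set.mem_compl_singleton_iff.1 hb)]

theorem commutatorElement_of_ne_one {a : α} {g : FreeGroup α}
    (hg : g ∈ Subgroup.closure (of '' {a}ᶜ)) (hg1 : g ≠ 1) : ⁅g, of a⁆ ≠ 1 := by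
  classical
  rw [Ne, commutatorElement_eq_one_iff_mul_comm]
  intro h
  refine hg1 ?_
  simpa [swapAction_apply_of_mem_closure hg, swapAction_of_self] using
    DFunLike.congr_fun (congrArg (swapAction a) h) (Sum.inr 1)

theorem leftNormedCommutator_ne_one_of_mem_closure {s : Set α} {g : FreeGroup α}
    (hg : g ∈ Subgroup.closure (of '' s)) (hg1 : g ≠ 1) {l : List α} (hl : l.Nodup)
    (hls : ∀ b ∈ l, b ∉ s) : leftNormedCommutator g (l.map of) ≠ 1 := by
  induction l generalizing g s with
  | nil => exact hg1
  | cons b l ih =>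
    rw [List.nodup_cons] at hl
    have hb : of b ∈ Subgroup.closure (of '' insert b s) :=
      Subgroup.subset_closure (Set.mem_image_of_mem _ (Set.mem_insert b s))
    have hg' : g ∈ Subgroup.closure (of '' insert b s) :=
      Subgroup.closure_mono (Set.image_mono (Set.subset_insert b s)) hg
    refine ih (s := insert b s) ?_ ?_ hl.2 ?_
    · rw [commutatorElement_def]
      exact mul_mem (mul_mem (mul_mem hg' hb) (inv_mem hg')) (inv_mem hb)
    · refine commutatorElement_of_ne_one (Subgroup.closure_mono (Set.image_mono ?_) hg) hg1
      exact fun c hc hcb => hls b List.mem_cons_self (hcb ▸ hc)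
    · intro c hc
      simp only [Set.mem_insert_iff, not_or]
      exact ⟨ne_of_mem_of_not_mem hc hl.1, hls c (List.mem_cons_of_mem b hc)⟩

theorem leftNormedCommutator_of_ne_one {a : α} {l : List α} (hl : (a :: l).Nodup) :
    leftNormedCommutator (of a) (l.map of) ≠ 1 := by
  rw [List.nodup_cons] at hl
  exact leftNormedCommutator_ne_one_of_mem_closure (s := {a})
    (Subgroup.subset_closure ⟨a, rfl, rfl⟩) (of_ne_one a) hl.2 fun b hb hba => hl.1 (hba ▸ hb)

theorem leftNormedCommutator_inv_mul_of_ne_one [DecidableEq α] {b a : α} {l : List α}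
    (hl : (b :: a :: l).Nodup) :
    leftNormedCommutator ((of b)⁻¹ * of a) (l.map fun c => (of b)⁻¹ * of c) ≠ 1 := by
  rw [List.nodup_cons] at hl
  have hπ : ∀ c ∈ a :: l, lift (Function.update of b 1) ((of b)⁻¹ * of c) = of c := by
    intro c hc
    simp [Function.update_of_ne (ne_of_mem_of_not_mem hc hl.1)]
  intro h
  apply leftNormedCommutator_of_ne_one hl.2
  have := congrArg (lift (Function.update of b 1)) h
  rwa [map_leftNormedCommutator, List.map_map, Function.comp_def, hπ a List.mem_cons_self,
    List.map_congr_left fun c hc => hπ c (List.mem_cons_of_mem a hc), _root_.map_one] at this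

theorem lift_update_of_inv_of_mul [DecidableEq α] {a : α} {s : Set α} (ha : a ∉ s)
    {t g : FreeGroup α} (hg : g ∈ Subgroup.closure (of '' s)) :
    lift (Function.update of a t) ((of a)⁻¹ * g) = t⁻¹ * g := by
  rw [_root_.map_mul, _root_.map_inv, lift_apply_of, Function.update_self,
    lift_update_of_apply_of_mem_closure ha t hg]

theorem leftNormedCommutator_notMem_normalClosure {ι : Type*} {a : α} {s : Set α} (ha : a ∉ s)
    {w : ι → FreeGroup α} (hw : ∀ i, w i ∈ Subgroup.closure (of '' s))
    (hfree : Function.Injective (lift w)) {b i : ι} {l : List ι} (hl : (b :: i :: l).Nodup) :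
    leftNormedCommutator ((of a)⁻¹ * w i) (l.map fun j => (of a)⁻¹ * w j) ∉
      Subgroup.normalClosure {(of a)⁻¹ * w b} := by
  classical
  set ρ := lift (Function.update of a (w b))
  set u := fun j => (of a)⁻¹ * w j
  set v := fun j => (of b)⁻¹ * of j
  have hρu : ρ ∘ u = lift w ∘ v := by
    funext j
    simp [u, v, ρ, lift_update_of_inv_of_mul ha (hw j)]
  have hker : Subgroup.normalClosure {u b} ≤ ρ.ker := by
    refine Subgroup.normalClosure_le_normal (Set.singleton_subset_iff.2 ?_)
    simp [u, ρ, lift_update_of_inv_of_mul ha (hw b)]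
  intro hmem
  refine leftNormedCommutator_inv_mul_of_ne_one hl (hfree ?_)
  rw [_root_.map_one, ← hker hmem, map_leftNormedCommutator, map_leftNormedCommutator,
    List.map_map, List.map_map, hρu]
  exact congrArg (leftNormedCommutator · _) (congr_fun hρu i).symm

end FreeGroup

theorem mem_zero_cons_ofFn_succ_iff {d : ℕ} (hd : 2 ≤ d) (j : Fin d) :
    j ∈ (⟨0, zero_lt_two.trans_le hd⟩ : Fin d) :: List.ofFn (fun k : Fin (d - 2) =>
      (⟨k + 1, Nat.lt_of_succ_lt (Nat.add_lt_of_lt_sub (b := 2) k.2)⟩ : Fin d))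
      ↔ (j : ℕ) < d - 1 := by
  simp only [List.mem_cons, List.mem_ofFn, Fin.ext_iff]
  refine ⟨by rintro (h | ⟨k, hk⟩) <;> omega, fun hj => ?_⟩
  rcases Nat.eq_zero_or_pos j with h | h
  · exact .inl h
  · exact .inr ⟨⟨j - 1, by omega⟩, by simp only; omega⟩

theorem nodup_last_cons_zero_cons_ofFn_succ {d : ℕ} (hd : 2 ≤ d) :
    ((⟨d - 1, Nat.sub_lt (zero_lt_two.trans_le hd) one_pos⟩ : Fin d) ::
      (⟨0, zero_lt_two.trans_le hd⟩ : Fin d) :: List.ofFn (fun k : Fin (d - 2) =>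
        (⟨k + 1, Nat.lt_of_succ_lt (Nat.add_lt_of_lt_sub (b := 2) k.2)⟩ : Fin d))).Nodup := by
  refine List.nodup_cons.2 ⟨fun h => by simpa using (mem_zero_cons_ofFn_succ_iff hd _).1 h, ?_⟩
  refine List.nodup_cons.2 ⟨by simp [Fin.ext_iff], ?_⟩
  exact List.nodup_ofFn.2 fun a b h => by simpa [Fin.ext_iff] using h

/-- With `F` free on `{x,y,z}` (`z = of 2` in `FreeGroup (Fin 3)`),
`w₁, …, w_d ∈ ⟨x,y⟩` freely generating a free subgroup of rank `d ≥ 2`, and `Lᵢ` the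
normal closure of `z⁻¹wᵢ`, the iterated commutator `[z⁻¹w₁, …, z⁻¹w_{d-1}]` lies in
`⋂_{j=1}^{d-1} Lⱼ` but not in `L_d`; in particular `⋂_{j ≠ d} Lⱼ ⊄ L_d`.
(Indices are 0-based: `w i` for `i : Fin d`, `L_d` is `L ⟨d-1, _⟩`.) -/
theorem stmt_9 {d : ℕ} (hd : 2 ≤ d) (w : Fin d → FreeGroup (Fin 3))
    (hw : ∀ i, w i ∈ Subgroup.closure {FreeGroup.of (0 : Fin 3), FreeGroup.of 1})
    (hfree : Function.Injective (FreeGroup.lift w : FreeGroup (Fin d) →* FreeGroup (Fin 3)))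
    (L : Fin d → Subgroup (FreeGroup (Fin 3)))
    (hL : ∀ i, L i = Subgroup.normalClosure {(FreeGroup.of (2 : Fin 3))⁻¹ * w i})
    (c : FreeGroup (Fin 3))
    (hc : c = leftNormedCommutator
      ((FreeGroup.of (2 : Fin 3))⁻¹ * w ⟨0, by omega⟩)
      (List.ofFn fun k : Fin (d - 2) =>
        (FreeGroup.of (2 : Fin 3))⁻¹ * w ⟨k + 1, by omega⟩)) :
    (∀ j : Fin d, (j : ℕ) < d - 1 → c ∈ L j) ∧
    c ∉ L ⟨d - 1, by omega⟩ ∧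
    ¬ (⨅ j : {j : Fin d // (j : ℕ) < d - 1}, L j) ≤ L ⟨d - 1, by omega⟩ := by
  set u : Fin d → FreeGroup (Fin 3) := fun i => (FreeGroup.of 2)⁻¹ * w i
  set l : List (Fin d) := List.ofFn fun k : Fin (d - 2) => ⟨k + 1, by omega⟩
  have hc' : c = leftNormedCommutator (u ⟨0, by omega⟩) (l.map u) := by
    rw [hc, List.map_ofFn]; rfl
  have hmem : ∀ j : Fin d, (j : ℕ) < d - 1 → c ∈ L j := fun j hj => by
    rw [hL, hc']
    exact leftNormedCommutator_mem (List.mem_map_of_mem ((mem_zero_cons_ofFn_succ_iff hd j).2 hj))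
      (Subgroup.subset_normalClosure rfl)
  have hnot : c ∉ L ⟨d - 1, by omega⟩ := by
    rw [hL, hc']
    exact FreeGroup.leftNormedCommutator_notMem_normalClosure (a := 2) (s := {0, 1}) (by decide)
      (fun i => by rw [Set.image_pair]; exact hw i) hfree (nodup_last_cons_zero_cons_ofFn_succ hd)
  exact ⟨hmem, hnot, fun hle => hnot (hle (Subgroup.mem_iInf.2 fun j => hmem j j.2))⟩
end

section
/- For every d ∈ ℕ there exists a 3-generated subgroup H_d of the d-th direct power of the free group of rank 2 such that H_d contains a free abelian subgroup of rank d. -/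
/-!
Let `a, b` generate `𝔽₂` and let `H_d ≤ 𝔽₂^d` be generated by `x = (a, …, a)`, `y = (b, …, b)` and
`z = (a⁰, a¹, …, a^(d-1))`. Then `z x⁻ᵐ = (a^(j-m))_j ∈ H_d`, and the iterated commutator of `y`
with the `z x⁻ᵐ`, `m ≠ i`, is trivial in each coordinate `j ≠ i` (one of the commutators is taken
with `a⁰ = 1`), while in coordinate `i` it is an iterated commutator of `b` with nonzero powers of
`a`. The latter is nontrivial: under `a ↦ T`, `b ↦ S` in `SL(2, ℤ)`, the lower-left entry of
`[M, Tⁿ]` is `-n c²`, where `c` is that of `M`. As `𝔽₂` is torsion-free, these `d` elements, each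
supported on a single coordinate, generate a copy of `ℤ^d` inside `H_d`.
-/

open Function Matrix.SpecialLinearGroup ModularGroup
open scoped commutatorElement MatrixGroups

theorem Subgroup.exists_injective_pi_multiplicative_int_of_mulSingle_mem {ι : Type*} [Finite ι]
    [DecidableEq ι] {G : ι → Type*} [∀ i, Group (G i)] [∀ i, IsMulTorsionFree (G i)]
    (H : Subgroup (∀ i, G i)) (g : ∀ i, G i) (hg : ∀ i, g i ≠ 1)
    (hH : ∀ i, Pi.mulSingle i (g i) ∈ H) :
    ∃ ψ : (ι → Multiplicative ℤ) →* (∀ i, G i), Injective ψ ∧ ψ.range ≤ H := by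
  refine ⟨MonoidHom.piMap fun i => zpowersHom (G i) (g i), ?_, ?_⟩
  · refine (injective_iff_map_eq_one _).2 fun f hf => funext fun i => ?_
    have hfi := congrFun hf i
    simp only [MonoidHom.piMap_apply, zpowersHom_apply, Pi.one_apply,
      IsMulTorsionFree.zpow_eq_one_iff_right (hg i)] at hfi
    exact toAdd_eq_zero.1 hfi
  · rintro _ ⟨f, rfl⟩
    induction f using Pi.mulSingle_induction with
    | one => rw [map_one]; exact H.one_mem
    | mul f f' hf hf' => rw [map_mul]; exact H.mul_mem hf hf'
    | mulSingle i n =>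
      have hψ : MonoidHom.piMap (fun i => zpowersHom (G i) (g i)) (Pi.mulSingle i n) =
          Pi.mulSingle i (g i) ^ n.toAdd := by
        rw [← Pi.mulSingle_zpow]
        ext j
        obtain rfl | hj := eq_or_ne j i <;> simp [*]
      exact hψ ▸ H.zpow_mem (hH i) _

section IteratedCommutator

variable {G H : Type*} [Group G] [Group H]

def iteratedCommutator (x : G) (ys : List G) : G :=
  ys.foldr (fun y g => ⁅g, y⁆) x

@[simp]
theorem iteratedCommutator_nil (x : G) : iteratedCommutator x [] = x := rfl

@[simp]
theorem iteratedCommutator_cons (x y : G) (ys : List G) :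
    iteratedCommutator x (y :: ys) = ⁅iteratedCommutator x ys, y⁆ := rfl

theorem map_iteratedCommutator (f : G →* H) (x : G) (ys : List G) :
    f (iteratedCommutator x ys) = iteratedCommutator (f x) (ys.map f) := by
  induction ys with
  | nil => rfl
  | cons y ys ih => simp [map_commutatorElement, ih]

theorem iteratedCommutator_eq_one_of_one_mem {x : G} {ys : List G} (h : 1 ∈ ys) :
    iteratedCommutator x ys = 1 := by
  induction ys with
  | nil => simp at h
  | cons y ys ih =>
    obtain rfl | h := List.mem_cons.1 h
    · simp
    · simp [ih h]

theorem Subgroup.iteratedCommutator_mem {K : Subgroup G} {x : G} {ys : List G} (hx : x ∈ K)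
    (hys : ∀ y ∈ ys, y ∈ K) : iteratedCommutator x ys ∈ K := by
  induction ys with
  | nil => exact hx
  | cons y ys ih =>
    simp only [List.mem_cons, forall_eq_or_imp] at hys
    rw [iteratedCommutator_cons, commutatorElement_def]
    have := ih hys.2
    exact K.mul_mem (K.mul_mem (K.mul_mem this hys.1) (K.inv_mem this)) (K.inv_mem hys.1)

end IteratedCommutator

theorem ModularGroup.commutator_T_zpow_apply_one_zero (M : SL(2, ℤ)) (n : ℤ) :
    (⁅M, T ^ n⁆ : SL(2, ℤ)) 1 0 = -n * M 1 0 ^ 2 := by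
  have hdet := M.det_coe
  rw [Matrix.det_fin_two] at hdet
  simp [commutatorElement_def, Matrix.mul_apply, Fin.sum_univ_two, coe_T_zpow,
    Matrix.adjugate_fin_two]
  ring

theorem ModularGroup.iteratedCommutator_S_T_zpow_apply_one_zero_ne_zero {ns : List ℤ}
    (hns : ∀ n ∈ ns, n ≠ 0) : iteratedCommutator S (ns.map (T ^ ·)) 1 0 ≠ 0 := by
  induction ns with
  | nil => simp [coe_S]
  | cons n ns ih =>
    simp only [List.mem_cons, forall_eq_or_imp] at hns
    rw [List.map_cons, iteratedCommutator_cons, commutator_T_zpow_apply_one_zero]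
    exact mul_ne_zero (neg_ne_zero.2 hns.1) (pow_ne_zero 2 (ih hns.2))

theorem FreeGroup.iteratedCommutator_of_zpow_ne_one {ns : List ℤ} (hns : ∀ n ∈ ns, n ≠ 0) :
    iteratedCommutator (of 1) (ns.map (of 0 ^ ·)) ≠ (1 : FreeGroup (Fin 2)) := by
  intro h
  have := congrArg (fun w => lift ![T, S] w 1 0) h
  simp only [map_iteratedCommutator, List.map_map] at this
  refine iteratedCommutator_S_T_zpow_apply_one_zero_ne_zero hns ?_
  simpa [Function.comp_def] using this

namespace ThreeGenerated

open FreeGroup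

variable (d : ℕ)

def diagonalA : Fin d → FreeGroup (Fin 2) := fun _ => of 0

def diagonalB : Fin d → FreeGroup (Fin 2) := fun _ => of 1

def staircaseA : Fin d → FreeGroup (Fin 2) := fun j => of 0 ^ (j : ℕ)

def shiftedStaircase (m : Fin d) : Fin d → FreeGroup (Fin 2) :=
  staircaseA d * diagonalA d ^ (-(m : ℤ))

noncomputable def isolator (i : Fin d) : Fin d → FreeGroup (Fin 2) :=
  iteratedCommutator (diagonalB d) ((Finset.univ.erase i).toList.map (shiftedStaircase d))

def generators : Set (Fin d → FreeGroup (Fin 2)) := {diagonalA d, diagonalB d, staircaseA d}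

variable {d}

theorem shiftedStaircase_apply (m j : Fin d) :
    shiftedStaircase d m j = of 0 ^ ((j : ℤ) - m) := by
  simp [shiftedStaircase, staircaseA, diagonalA, sub_eq_add_neg, zpow_add]

theorem isolator_apply (i j : Fin d) :
    isolator d i j = iteratedCommutator (of 1)
      (((Finset.univ.erase i).toList.map fun m : Fin d => (j : ℤ) - m).map (of 0 ^ ·)) := by
  rw [isolator, ← Pi.evalMonoidHom_apply (fun _ => FreeGroup (Fin 2)) j (iteratedCommutator _ _),
    map_iteratedCommutator]
  simp [List.map_map, Function.comp_def, shiftedStaircase_apply, diagonalB]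

theorem isolator_apply_of_ne {i j : Fin d} (h : j ≠ i) : isolator d i j = 1 := by
  rw [isolator_apply]
  exact iteratedCommutator_eq_one_of_one_mem
    (List.mem_map.2 ⟨0, List.mem_map.2 ⟨j, by simp [h]⟩, zpow_zero _⟩)

theorem isolator_apply_self_ne_one (i : Fin d) : isolator d i i ≠ 1 := by
  rw [isolator_apply]
  refine iteratedCommutator_of_zpow_ne_one fun n hn => ?_
  obtain ⟨m, hm, rfl⟩ := List.mem_map.1 hn
  simp only [Finset.mem_toList, Finset.mem_erase] at hm
  exact sub_ne_zero.2 (by exact_mod_cast Fin.val_ne_of_ne hm.1.symm)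

theorem isolator_eq_mulSingle (i : Fin d) : isolator d i = Pi.mulSingle i (isolator d i i) := by
  ext j
  obtain rfl | h := eq_or_ne j i
  · simp
  · simp [h, isolator_apply_of_ne h]

theorem isolator_mem_closure_generators (i : Fin d) :
    isolator d i ∈ Subgroup.closure (generators d) := by
  have mem : ∀ g ∈ generators d, g ∈ Subgroup.closure (generators d) :=
    fun _ => (Subgroup.subset_closure ·)
  refine Subgroup.iteratedCommutator_mem (mem _ (by simp [generators])) fun y hy => ?_
  obtain ⟨m, -, rfl⟩ := List.mem_map.1 hy
  exact mul_mem (mem _ (by simp [generators])) (zpow_mem (mem _ (by simp [generators])) _)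

theorem ncard_generators_le : (generators d).ncard ≤ 3 :=
  (Set.ncard_insert_le _ _).trans (Nat.succ_le_succ ((Set.ncard_insert_le _ _).trans (by simp)))

end ThreeGenerated

/-- For every `d` there is a 3-generated subgroup `H_d` of `𝔽₂^d` (the `d`-th
direct power of the free group of rank 2) containing a free abelian subgroup of rank `d`. -/
theorem stmt_11 (d : ℕ) :
    ∃ H : Subgroup (Fin d → FreeGroup (Fin 2)),
      (∃ S : Set (Fin d → FreeGroup (Fin 2)),
        S.Finite ∧ S.ncard ≤ 3 ∧ Subgroup.closure S = H) ∧
      ∃ ψ : (Fin d → Multiplicative ℤ) →* (Fin d → FreeGroup (Fin 2)),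
        Function.Injective ψ ∧ ψ.range ≤ H :=
  ⟨_, ⟨ThreeGenerated.generators d, ((Set.finite_singleton _).insert _).insert _,
      ThreeGenerated.ncard_generators_le, rfl⟩,
    Subgroup.exists_injective_pi_multiplicative_int_of_mulSingle_mem _ _
      ThreeGenerated.isolator_apply_self_ne_one fun i =>
        ThreeGenerated.isolator_eq_mulSingle i ▸ ThreeGenerated.isolator_mem_closure_generators i⟩
end
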